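/- Suppose ρ satisfies detailed balance for W. Define c(u) := ∑_x ρ(x) V(x) (e^{uL} Q)(x). Then for every u ≥ 0 the function c is differentiable at u with some derivative c′(u), and ∑_x ρ(x) (L′ (e^{uL} Q))(x) = −(a + b)·c′(u). (Under time-reversal symmetry the two terms of the stationary response formula coincide, recovering the equilibrium fluctuation-dissipation theorem R(t,s) = β ∂_s⟨V(x_s)Q(x_t)⟩_eq when a + b = β.) -/

import Mathlib

/-- The generator matrix of the Markov jump process with rates `W`:
entry `W x y` at `(x, y)` for `x ≠ y` and `-∑_{y ≠ x} W x y` on the diagonal. -/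
noncomputable def genMatrix {K : Type*} [Fintype K] [DecidableEq K] (W : K → K → ℝ) :
    Matrix K K ℝ :=
  Matrix.of fun x y =>
    if x = y then -∑ z ∈ Finset.univ.filter (fun z => z ≠ x), W x z else W x y

/-- The semigroup `e^{tL}` (matrix exponential of `t • L`). -/
noncomputable def expL {K : Type*} [Fintype K] [DecidableEq K] (W : K → K → ℝ) (t : ℝ) :
    Matrix K K ℝ :=
  NormedSpace.exp (t • genMatrix W)

/-- Action of `e^{tL}` on observables: `(e^{tL} f)(x) = ∑ y, (e^{tL})_{x,y} f y`. -/
noncomputable def actE {K : Type*} [Fintype K] [DecidableEq K] (W : K → K → ℝ) (t : ℝ)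
    (f : K → ℝ) : K → ℝ :=
  fun x => ∑ y, expL W t x y * f y

/-- Action of `e^{tL}` on distributions: `(μ e^{tL})(x) = ∑ z, μ z (e^{tL})_{z,x}`. -/
noncomputable def muE {K : Type*} [Fintype K] [DecidableEq K] (W : K → K → ℝ) (μ : K → ℝ)
    (t : ℝ) : K → ℝ :=
  fun x => ∑ z, μ z * expL W t z x

/-- The backward generator acting on observables. -/
noncomputable def genL {K : Type*} [Fintype K] (W : K → K → ℝ) (f : K → ℝ) : K → ℝ :=
  fun x => ∑ y, W x y * (f y - f x)

/-- The linearized perturbation operator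
`(L' f)(x) = ∑ y, W x y * (b V y - a V x) * (f y - f x)`. -/
noncomputable def genL' {K : Type*} [Fintype K] (W : K → K → ℝ) (V : K → ℝ) (a b : ℝ)
    (f : K → ℝ) : K → ℝ :=
  fun x => ∑ y, W x y * (b * V y - a * V x) * (f y - f x)

/-- The perturbed rates `W_h x y = W x y * exp (h (b V y - a V x))`. -/
noncomputable def pertW {K : Type*} (W : K → K → ℝ) (V : K → ℝ) (a b h : ℝ) :
    K → K → ℝ :=
  fun x y => W x y * Real.exp (h * (b * V y - a * V x))

/-!
Since `c u = ∑ x, ρ x V x (e^{uL} Q) x` and `d/du e^{uL} = L e^{uL}`, we get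
`c' u = ∑ x, ρ x V x (L f) x` with `f = e^{uL} Q`. Detailed balance makes
`∑ x y, ρ x W x y h x y` vanish for every antisymmetric `h`. The weight `b V y - a V x` of `L'`
differs from `-(a + b) V x` by the symmetric `b (V x + V y)`, whose product with the increment
`f y - f x` is antisymmetric; this gives the identity.
-/

open Finset Matrix

section Semigroup

variable {K : Type*} [Fintype K] [DecidableEq K]

theorem genMatrix_mulVec (W : K → K → ℝ) (f : K → ℝ) : genMatrix W *ᵥ f = genL W f := by
  funext x
  have hdiag : genMatrix W x x = -∑ y ∈ univ.erase x, W x y := by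
    simp [genMatrix, filter_ne']
  have hoff : ∀ y ∈ univ.erase x, genMatrix W x y * f y = W x y * f y := fun y hy => by
    simp [genMatrix, (ne_of_mem_erase hy).symm]
  rw [mulVec, dotProduct, genL, ← add_sum_erase _ _ (mem_univ x),
    ← add_sum_erase _ _ (mem_univ x), sum_congr rfl hoff, hdiag]
  simp only [sub_self, mul_zero, zero_add, mul_sub, sum_sub_distrib, ← sum_mul]
  ring

theorem hasDerivAt_expL (W : K → K → ℝ) (u : ℝ) :
    HasDerivAt (expL W) (genMatrix W * expL W u) u := by
  -- any normed-algebra structure on matrices induces the product topology of the statement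
  let _ : NormedRing (Matrix K K ℝ) := Matrix.linftyOpNormedRing
  let _ : NormedAlgebra ℝ (Matrix K K ℝ) := Matrix.linftyOpNormedAlgebra
  exact hasDerivAt_exp_smul_const' (genMatrix W) u

theorem hasDerivAt_actE (W : K → K → ℝ) (f : K → ℝ) (u : ℝ) (x : K) :
    HasDerivAt (fun t => actE W t f x) (genL W (actE W u f) x) u := by
  have hentry (y : K) : HasDerivAt (fun t => expL W t x y) ((genMatrix W * expL W u) x y) u :=
    hasDerivAt_pi.1 (hasDerivAt_pi.1 (hasDerivAt_expL W u) x) y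
  have hval : genL W (actE W u f) x = ((genMatrix W * expL W u) *ᵥ f) x := by
    rw [← mulVec_mulVec, genMatrix_mulVec]
    rfl
  rw [hval]
  exact HasDerivAt.fun_sum fun y _ => (hentry y).mul_const (f y)

end Semigroup

section DetailedBalance

variable {K : Type*} [Fintype K] {W : K → K → ℝ} {ρ : K → ℝ}

theorem sum_sum_antisymm_eq_zero_of_detailedBalance
    (hdb : ∀ x y, ρ x * W x y = ρ y * W y x) {h : K → K → ℝ} (hanti : ∀ x y, h y x = -h x y) :
    ∑ x, ∑ y, ρ x * W x y * h x y = 0 := by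
  have hswap : ∑ x, ∑ y, ρ x * W x y * h x y = -∑ x, ∑ y, ρ x * W x y * h x y := by
    conv_lhs => rw [sum_comm]
    rw [← sum_neg_distrib]
    refine sum_congr rfl fun y _ => ?_
    rw [← sum_neg_distrib]
    refine sum_congr rfl fun x _ => ?_
    rw [hdb, hanti x y]
    ring
  linarith

theorem sum_genL'_eq_of_detailedBalance (hdb : ∀ x y, ρ x * W x y = ρ y * W y x)
    (V : K → ℝ) (a b : ℝ) (f : K → ℝ) :
    ∑ x, ρ x * genL' W V a b f x = -(a + b) * ∑ x, ρ x * V x * genL W f x := by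
  have hzero := sum_sum_antisymm_eq_zero_of_detailedBalance hdb
    (h := fun x y => b * (V x + V y) * (f y - f x)) fun x y => by ring
  have hsplit : ∑ x, ∑ y, ρ x * W x y * (b * (V x + V y) * (f y - f x)) =
      ∑ x, ρ x * genL' W V a b f x + (a + b) * ∑ x, ρ x * V x * genL W f x := by
    simp only [genL', genL, mul_sum, ← sum_add_distrib]
    exact sum_congr rfl fun x _ => sum_congr rfl fun y _ => by ring
  linarith

end DetailedBalance

theorem equilibrium_fluctuation_dissipation_general
    {K : Type*} [Fintype K] [DecidableEq K]
    (W : K → K → ℝ)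
    (ρ : K → ℝ)
    (hdb : ∀ x y : K, ρ x * W x y = ρ y * W y x)
    (V Q : K → ℝ) (a b : ℝ) (u : ℝ) :
    ∃ c' : ℝ,
      HasDerivAt (fun v => ∑ x, ρ x * V x * actE W v Q x) c' u ∧
      ∑ x, ρ x * genL' W V a b (actE W u Q) x = -(a + b) * c' :=
  ⟨_, HasDerivAt.fun_sum fun x _ => (hasDerivAt_actE W Q u x).const_mul (ρ x * V x),
    sum_genL'_eq_of_detailedBalance hdb V a b (actE W u Q)⟩

/-- equilibrium fluctuation-dissipation theorem: if `ρ` satisfies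
detailed balance for `W` and `c u = ∑ x, ρ x * V x * (e^{uL} Q) x`, then for every
`u ≥ 0` the derivative `c' u` exists and
`∑ x, ρ x * (L' (e^{uL} Q)) x = -(a + b) * c'(u)`. -/
theorem equilibrium_fluctuation_dissipation
    {K : Type*} [Fintype K] [Nonempty K] [DecidableEq K]
    (W : K → K → ℝ) (hW : ∀ x y : K, x ≠ y → 0 ≤ W x y)
    (ρ : K → ℝ) (hρ0 : ∀ x, 0 ≤ ρ x) (hρ1 : ∑ x, ρ x = 1)
    (hdb : ∀ x y : K, ρ x * W x y = ρ y * W y x)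
    (V Q : K → ℝ) (a b : ℝ) (u : ℝ) (hu : 0 ≤ u) :
    ∃ c' : ℝ,
      HasDerivAt (fun v => ∑ x, ρ x * V x * actE W v Q x) c' u ∧
      ∑ x, ρ x * genL' W V a b (actE W u Q) x = -(a + b) * c' :=
  equilibrium_fluctuation_dissipation_general W ρ hdb V Q a b u
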